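/- Let N = (L_1, M_1), …, (L_r, M_r) (r ≥ 1) be a special convenient integral Newton-polygon datum satisfying conditions (R1)–(R3). Then the integers β_0 := 1 + ht(N) and β_k := L^{(k−1)}_1/M^{(k−1)}_1 for k = 1, …, r form a Puiseux characteristic sequence: β_0 < β_1 < ⋯ < β_r, gcd(β_0, …, β_r) = 1, and gcd(β_0, …, β_k) < gcd(β_0, …, β_{k−1}) for every 1 ≤ k ≤ r. -/

import Mathlib

/-- A canonical Newton-polygon datum with `r` edges: a pair of `1`-indexed sequences
`(L, M)` of positive rationals with strictly increasing inclinations `L k / M k`. -/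
def IsCanonicalNP (p : (ℕ → ℚ) × (ℕ → ℚ)) (r : ℕ) : Prop :=
  (∀ k, 1 ≤ k → k ≤ r → 0 < p.1 k ∧ 0 < p.2 k) ∧
  ∀ k, 1 ≤ k → k < r → p.1 k / p.2 k < p.1 (k + 1) / p.2 (k + 1)

/-- An integral datum: all the entries are positive integers. -/
def IsIntegralNP (p : (ℕ → ℚ) × (ℕ → ℚ)) (r : ℕ) : Prop :=
  ∀ k, 1 ≤ k → k ≤ r →
    (∃ a : ℕ, 0 < a ∧ p.1 k = a) ∧ (∃ b : ℕ, 0 < b ∧ p.2 k = b)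

/-- A special datum: all the inclinations are greater than `1`. -/
def IsSpecialNP (p : (ℕ → ℚ) × (ℕ → ℚ)) (r : ℕ) : Prop :=
  ∀ k, 1 ≤ k → k ≤ r → 1 < p.1 k / p.2 k

/-- The height `ht(N) = M_1 + ⋯ + M_r` of a Newton-polygon datum with `r` edges. -/
def htNP (p : (ℕ → ℚ) × (ℕ → ℚ)) (r : ℕ) : ℚ := ∑ k ∈ Finset.Icc 1 r, p.2 k

/-- The reduction `R(N)`, with `L'_i = L_{i+1} − (L_1/(1+M_1))·M_{i+1}` and
`M'_i = M_{i+1}/(1+M_1)`; its iterates give `R^i(N)` via `redNP^[i] p`. -/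
def redNP (p : (ℕ → ℚ) × (ℕ → ℚ)) : (ℕ → ℚ) × (ℕ → ℚ) :=
  (fun i => p.1 (i + 1) - (p.1 1 / (1 + p.2 1)) * p.2 (i + 1),
   fun i => p.2 (i + 1) / (1 + p.2 1))

/-- Condition (R1): `1 + ht(N) < L_1/M_1`. -/
def CondR1 (p : (ℕ → ℚ) × (ℕ → ℚ)) (r : ℕ) : Prop :=
  1 + htNP p r < p.1 1 / p.2 1

/-- Condition (R2): for `0 ≤ i ≤ r−1`, all entries of `R^i(N)` are integers and
`L^{(i)}_1/M^{(i)}_1` is a (natural) integer. -/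
def CondR2 (p : (ℕ → ℚ) × (ℕ → ℚ)) (r : ℕ) : Prop :=
  ∀ i, i ≤ r - 1 →
    (∀ k, 1 ≤ k → k ≤ r - i →
      (∃ a : ℤ, (redNP^[i] p).1 k = a) ∧ (∃ b : ℤ, (redNP^[i] p).2 k = b)) ∧
    ∃ a : ℕ, (redNP^[i] p).1 1 / (redNP^[i] p).2 1 = a

/-- Condition (R3): for `0 ≤ i ≤ r−1`,
`(1 + M^{(i)}_1)·gcd(L^{(i)}_1/M^{(i)}_1, 1 + ht(R^i(N))) = 1 + ht(R^i(N))`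
(the gcd of the two integer-valued rationals being taken via their numerators). -/
def CondR3 (p : (ℕ → ℚ) × (ℕ → ℚ)) (r : ℕ) : Prop :=
  ∀ i, i ≤ r - 1 →
    (1 + (redNP^[i] p).2 1) *
      (Nat.gcd ((redNP^[i] p).1 1 / (redNP^[i] p).2 1).num.natAbs
        (1 + htNP (redNP^[i] p) (r - i)).num.natAbs : ℚ)
    = 1 + htNP (redNP^[i] p) (r - i)

/-- An increasing sequence `δ_0 < δ_1 < ⋯ < δ_h` of positive integers is a Puiseux
characteristic sequence if `gcd(δ_0, …, δ_h) = 1` and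
`gcd(δ_0, …, δ_k) < gcd(δ_0, …, δ_{k−1})` for all `1 ≤ k ≤ h`. -/
def IsPuiseuxChar (δ : ℕ → ℕ) (h : ℕ) : Prop :=
  (∀ k, k ≤ h → 0 < δ k) ∧ (∀ k, k < h → δ k < δ (k + 1)) ∧
  (Finset.range (h + 1)).gcd δ = 1 ∧
  ∀ k, 1 ≤ k → k ≤ h → (Finset.range (k + 1)).gcd δ < (Finset.range k).gcd δ

/-!
Write `b_i = 1 + ht(R^i(N))`. Reduction divides every `M` by `1 + M_1`, so
`b_i = (1 + M^{(i)}_1) b_{i+1}`, and (R3) becomes `gcd(β_{i+1}, b_i) = b_{i+1}`. Since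
`b_0 = β_0`, induction gives `gcd(β_0, …, β_i) = b_i`, which strictly decreases to `b_r = 1`.
The inclinations of `R(N)` are `(1 + M_1) L_{k+1}/M_{k+1} - L_1 > L_1/M_1`, which together
with (R1) makes the `β_k` increase.
-/

open Finset

theorem Finset.gcd_range_succ_eq_of_gcd_step {β b : ℕ → ℕ} {r : ℕ} (h0 : β 0 = b 0)
    (hstep : ∀ i < r, Nat.gcd (β (i + 1)) (b i) = b (i + 1)) :
    ∀ i ≤ r, (range (i + 1)).gcd β = b i := by
  intro i
  induction i with
  | zero => intro _; simp [h0]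
  | succ i ih =>
    intro hi
    rw [range_add_one, gcd_insert, ih (by omega), gcd_eq_nat_gcd, hstep i (by omega)]

theorem isPuiseuxChar_of_gcd_chain {β b : ℕ → ℕ} {r : ℕ} (hβ : ∀ k < r, β k < β (k + 1))
    (hgcd : ∀ i ≤ r, (range (i + 1)).gcd β = b i) (hb : ∀ i < r, b (i + 1) < b i)
    (hbr : b r = 1) : IsPuiseuxChar β r := by
  have hβ0 : 0 < β 0 := by
    have hb0 : β 0 = b 0 := by simpa using hgcd 0 (Nat.zero_le r)
    have : b r ≤ b 0 :=
      (strictAntiOn_Iic_of_succ_lt hb).antitoneOn (Set.mem_Iic.2 (Nat.zero_le r)) Set.self_mem_Iic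
        (Nat.zero_le r)
    omega
  refine ⟨fun k hk => ?_, hβ, by rw [hgcd r le_rfl, hbr], fun k hk1 hkr => ?_⟩
  · exact hβ0.trans_le <| (strictMonoOn_Iic_of_lt_succ hβ).monotoneOn
      (Set.mem_Iic.2 (Nat.zero_le r)) (Set.mem_Iic.2 hk) (Nat.zero_le k)
  · obtain ⟨k, rfl⟩ := Nat.exists_eq_add_of_le' hk1
    rw [hgcd _ hkr, hgcd k (by omega)]
    exact hb k hkr

theorem Rat.natAbs_num_eq_floor {x : ℚ} (h : (⌊x⌋₊ : ℚ) = x) : x.num.natAbs = ⌊x⌋₊ := by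
  rw [← h]
  simp

section Reduction

variable {q : (ℕ → ℚ) × (ℕ → ℚ)} {s : ℕ}

theorem htNP_redNP_mul (hM : 1 + q.2 1 ≠ 0) (n : ℕ) :
    (1 + htNP (redNP q) n) * (1 + q.2 1) = 1 + htNP q (n + 1) := by
  induction n with
  | zero => simp [htNP, redNP]
  | succ n ih =>
    have hred : (redNP q).2 (n + 1) * (1 + q.2 1) = q.2 (n + 1 + 1) := div_mul_cancel₀ _ hM
    rw [htNP, sum_Icc_succ_top (by omega), htNP, sum_Icc_succ_top (by omega : 1 ≤ n + 2),
      ← htNP, ← htNP]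
    linear_combination ih + hred

theorem redNP_inclination (hM : 1 + q.2 1 ≠ 0) {k : ℕ} (hMk : q.2 (k + 1) ≠ 0) :
    (redNP q).1 k / (redNP q).2 k = (1 + q.2 1) * (q.1 (k + 1) / q.2 (k + 1)) - q.1 1 := by
  simp only [redNP]
  field_simp

theorem IsCanonicalNP.htNP_nonneg (hc : IsCanonicalNP q s) : 0 ≤ htNP q s :=
  sum_nonneg fun k hk => (hc.1 k (mem_Icc.1 hk).1 (mem_Icc.1 hk).2).2.le

theorem IsCanonicalNP.first_inclination_lt (hc : IsCanonicalNP q s) {k : ℕ} (hk2 : 2 ≤ k)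
    (hks : k ≤ s) : q.1 1 / q.2 1 < q.1 k / q.2 k := by
  induction k, hk2 using Nat.le_induction with
  | base => exact hc.2 1 le_rfl (by omega)
  | succ k hk2 ih => exact (ih (by omega)).trans (hc.2 k (by omega) (by omega))

/-- The map `x ↦ (1 + M_1) x - L_1` taking the inclinations of `N` to those of `R(N)` is
increasing and fixes `L_1/M_1`. -/
theorem IsCanonicalNP.first_inclination_lt_redNP (hc : IsCanonicalNP q s) {k : ℕ} (hk1 : 1 ≤ k)
    (hks : k ≤ s - 1) : q.1 1 / q.2 1 < (redNP q).1 k / (redNP q).2 k := by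
  obtain ⟨hL, hM⟩ := hc.1 1 le_rfl (by omega)
  rw [redNP_inclination (by positivity) (hc.1 (k + 1) (by omega) (by omega)).2.ne']
  calc q.1 1 / q.2 1 = (1 + q.2 1) * (q.1 1 / q.2 1) - q.1 1 := by field_simp; ring
    _ < (1 + q.2 1) * (q.1 (k + 1) / q.2 (k + 1)) - q.1 1 := sub_lt_sub_right
      (mul_lt_mul_of_pos_left (hc.first_inclination_lt (by omega) (by omega)) (by positivity)) _

theorem isCanonicalNP_redNP (hc : IsCanonicalNP q s) : IsCanonicalNP (redNP q) (s - 1) := by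
  have hM' : ∀ k, 1 ≤ k → k ≤ s - 1 → 0 < (redNP q).2 k := fun k hk1 hks =>
    div_pos (hc.1 (k + 1) (by omega) (by omega)).2 (by linarith [(hc.1 1 le_rfl (by omega)).2])
  refine ⟨fun k hk1 hks => ⟨?_, hM' k hk1 hks⟩, fun k hk1 hks => ?_⟩
  · have hincl := hc.first_inclination_lt_redNP hk1 hks
    obtain ⟨hL1, hM1⟩ := hc.1 1 le_rfl (by omega)
    have : 0 < (redNP q).1 k / (redNP q).2 k := (div_pos hL1 hM1).trans hincl
    exact (div_pos_iff_of_pos_right (hM' k hk1 hks)).1 this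
  · have hM1 := (hc.1 1 le_rfl (by omega)).2
    rw [redNP_inclination (by positivity) (hc.1 (k + 1) (by omega) (by omega)).2.ne',
      redNP_inclination (by positivity) (hc.1 (k + 2) (by omega) (by omega)).2.ne']
    exact sub_lt_sub_right
      (mul_lt_mul_of_pos_left (hc.2 (k + 1) (by omega) (by omega)) (by positivity)) _

theorem isCanonicalNP_iterate_redNP (hc : IsCanonicalNP q s) (i : ℕ) :
    IsCanonicalNP (redNP^[i] q) (s - i) := by
  induction i with
  | zero => exact hc
  | succ i ih =>
    rw [Function.iterate_succ_apply', show s - (i + 1) = s - i - 1 by omega]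
    exact isCanonicalNP_redNP ih

end Reduction

/-- `b_i = 1 + ht(R^i(N))`; under (R3) it is `gcd(β_0, …, β_i)`. -/
def heightSeqNP (p : (ℕ → ℚ) × (ℕ → ℚ)) (r i : ℕ) : ℚ := 1 + htNP (redNP^[i] p) (r - i)

def charSeqNP (p : (ℕ → ℚ) × (ℕ → ℚ)) (r : ℕ) : ℕ → ℚ
  | 0 => 1 + htNP p r
  | k + 1 => (redNP^[k] p).1 1 / (redNP^[k] p).2 1

section CharSeq

variable {p : (ℕ → ℚ) × (ℕ → ℚ)} {r : ℕ}

theorem heightSeqNP_self : heightSeqNP p r r = 1 := by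
  simp [heightSeqNP, htNP]

theorem heightSeqNP_succ_mul (hc : IsCanonicalNP p r) {i : ℕ} (hi : i < r) :
    heightSeqNP p r (i + 1) * (1 + (redNP^[i] p).2 1) = heightSeqNP p r i := by
  have hM := ((isCanonicalNP_iterate_redNP hc i).1 1 le_rfl (by omega)).2
  have := htNP_redNP_mul (q := redNP^[i] p) (by positivity) (r - i - 1)
  rwa [show r - i - 1 + 1 = r - i by omega, ← Function.iterate_succ_apply' redNP,
    show r - i - 1 = r - (i + 1) by omega] at this

theorem heightSeqNP_succ_lt (hc : IsCanonicalNP p r) {i : ℕ} (hi : i < r) :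
    heightSeqNP p r (i + 1) < heightSeqNP p r i := by
  have hM := ((isCanonicalNP_iterate_redNP hc i).1 1 le_rfl (by omega)).2
  have hb : 0 < heightSeqNP p r (i + 1) := by
    have := (isCanonicalNP_iterate_redNP hc (i + 1)).htNP_nonneg
    rw [heightSeqNP]
    linarith
  rw [← heightSeqNP_succ_mul hc hi]
  exact lt_mul_of_one_lt_right hb (by linarith)

theorem heightSeqNP_succ_eq_gcd (hc : IsCanonicalNP p r) (h3 : CondR3 p r) {i : ℕ} (hi : i < r) :
    heightSeqNP p r (i + 1) =
      Nat.gcd (charSeqNP p r (i + 1)).num.natAbs (heightSeqNP p r i).num.natAbs := by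
  have hM := ((isCanonicalNP_iterate_redNP hc i).1 1 le_rfl (by omega)).2
  apply mul_right_cancel₀ (b := 1 + (redNP^[i] p).2 1) (by positivity)
  rw [heightSeqNP_succ_mul hc hi, mul_comm]
  exact (h3 i (by omega)).symm

theorem natCast_floor_heightSeqNP_zero (hc : IsCanonicalNP p r) (h2 : CondR2 p r) :
    (⌊heightSeqNP p r 0⌋₊ : ℚ) = heightSeqNP p r 0 := by
  have hnat : ∀ k ∈ Icc 1 r, ((⌊p.2 k⌋₊ : ℕ) : ℚ) = p.2 k := fun k hk => by
    obtain ⟨hk1, hkr⟩ := mem_Icc.1 hk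
    obtain ⟨a, ha⟩ := ((h2 0 (Nat.zero_le _)).1 k hk1 hkr).2
    have hpos := (hc.1 k hk1 hkr).2
    simp only [Function.iterate_zero, id_eq] at ha
    rw [ha] at hpos ⊢
    lift a to ℕ using (by exact_mod_cast hpos.le)
    simp
  have hht : heightSeqNP p r 0 = ((1 + ∑ k ∈ Icc 1 r, ⌊p.2 k⌋₊ : ℕ) : ℚ) := by
    push_cast
    rw [sum_congr rfl hnat]
    rfl
  rw [hht, Nat.floor_natCast]

theorem natCast_floor_heightSeqNP (hc : IsCanonicalNP p r) (h2 : CondR2 p r) (h3 : CondR3 p r)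
    {i : ℕ} (hi : i ≤ r) : (⌊heightSeqNP p r i⌋₊ : ℚ) = heightSeqNP p r i := by
  cases i with
  | zero => exact natCast_floor_heightSeqNP_zero hc h2
  | succ i => rw [heightSeqNP_succ_eq_gcd hc h3 hi, Nat.floor_natCast]

theorem natCast_floor_charSeqNP (hc : IsCanonicalNP p r) (h2 : CondR2 p r) {k : ℕ} (hk : k ≤ r) :
    (⌊charSeqNP p r k⌋₊ : ℚ) = charSeqNP p r k := by
  cases k with
  | zero => exact natCast_floor_heightSeqNP_zero hc h2
  | succ k =>
    obtain ⟨a, ha⟩ := (h2 k (by omega)).2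
    rw [charSeqNP, ha, Nat.floor_natCast]

theorem charSeqNP_lt_succ (hc : IsCanonicalNP p r) (h1 : CondR1 p r) {k : ℕ} (hk : k < r) :
    charSeqNP p r k < charSeqNP p r (k + 1) := by
  cases k with
  | zero => exact h1
  | succ k =>
    simp only [charSeqNP, Function.iterate_succ_apply']
    exact (isCanonicalNP_iterate_redNP hc k).first_inclination_lt_redNP le_rfl (by omega)

end CharSeq

theorem reduction_gives_puiseux_char_general
    (p : (ℕ → ℚ) × (ℕ → ℚ)) (r : ℕ)
    (hc : IsCanonicalNP p r)
    (h1 : CondR1 p r) (h2 : CondR2 p r) (h3 : CondR3 p r) :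
    ∃ β : ℕ → ℕ,
      (β 0 : ℚ) = 1 + htNP p r ∧
      (∀ k, 1 ≤ k → k ≤ r →
        (β k : ℚ) = (redNP^[k - 1] p).1 1 / (redNP^[k - 1] p).2 1) ∧
      IsPuiseuxChar β r := by
  have hβ := fun k (hk : k ≤ r) => natCast_floor_charSeqNP hc h2 hk
  have hb := fun i (hi : i ≤ r) => natCast_floor_heightSeqNP hc h2 h3 hi
  refine ⟨fun k => ⌊charSeqNP p r k⌋₊, hβ 0 (Nat.zero_le r), fun k hk1 hkr => ?_, ?_⟩
  · obtain ⟨k, rfl⟩ := Nat.exists_eq_add_of_le' hk1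
    exact hβ _ hkr
  refine isPuiseuxChar_of_gcd_chain (b := fun i => ⌊heightSeqNP p r i⌋₊) (fun k hk => ?_)
    (Finset.gcd_range_succ_eq_of_gcd_step rfl fun i hi => ?_) (fun i hi => ?_) ?_
  · rw [← Nat.cast_lt (α := ℚ), hβ k hk.le, hβ (k + 1) hk]
    exact charSeqNP_lt_succ hc h1 hk
  · rw [← Nat.cast_inj (R := ℚ), hb (i + 1) hi, heightSeqNP_succ_eq_gcd hc h3 hi,
      Rat.natAbs_num_eq_floor (hβ (i + 1) hi), Rat.natAbs_num_eq_floor (hb i hi.le)]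
  · rw [← Nat.cast_lt (α := ℚ), hb i hi.le, hb (i + 1) hi]
    exact heightSeqNP_succ_lt hc hi
  · simp only [heightSeqNP_self, Nat.floor_one]

/-- For a special convenient integral Newton-polygon datum `N` with
`r ≥ 1` edges satisfying conditions (R1)–(R3), the integers `β_0 := 1 + ht(N)` and
`β_k := L^{(k−1)}_1/M^{(k−1)}_1` (`k = 1, …, r`) form a Puiseux characteristic
sequence. -/
theorem reduction_gives_puiseux_char
    (p : (ℕ → ℚ) × (ℕ → ℚ)) (r : ℕ) (hr : 1 ≤ r)
    (hc : IsCanonicalNP p r) (hi : IsIntegralNP p r) (hs : IsSpecialNP p r)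
    (h1 : CondR1 p r) (h2 : CondR2 p r) (h3 : CondR3 p r) :
    ∃ β : ℕ → ℕ,
      (β 0 : ℚ) = 1 + htNP p r ∧
      (∀ k, 1 ≤ k → k ≤ r →
        (β k : ℚ) = (redNP^[k - 1] p).1 1 / (redNP^[k - 1] p).2 1) ∧
      IsPuiseuxChar β r :=
  reduction_gives_puiseux_char_general p r hc h1 h2 h3
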